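/- arXiv:1504.06219 — 6 statements merged into one kernel-verified Lean document; each statement's English description precedes it below -/
import Mathlib

section
/- Let a>0, b>0, c≥0, g0>0 and let f0, f1 be the MTTP vector fields on ℝ⁴. Then for every x = (x1,x2,x3,x4) ∈ ℝ⁴, the iterated Lie bracket [f0,[f0,f1]](x) equals (−a b sin x3, a b cos x3, 0, 0). -/
/-- The drift vector field of the MTTP system on ℝ⁴. -/
noncomputable def mttpF0 (a c g0 : ℝ) : (Fin 4 → ℝ) → (Fin 4 → ℝ) :=
  fun x => ![a * Real.cos (x 2) - c * x 0 * x 1,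
             a * Real.sin (x 2) + c * (x 0) ^ 2 - g0,
             x 3 - c * x 0,
             0]

/-- The control vector field of the MTTP system on ℝ⁴. -/
def mttpF1 (b : ℝ) : (Fin 4 → ℝ) → (Fin 4 → ℝ) :=
  fun _ => ![0, 0, 0, b]

/-- Lie bracket of vector fields on ℝ⁴: [f,g](x) = Dg(x)·f(x) − Df(x)·g(x). -/
noncomputable def lieBracket4 (f g : (Fin 4 → ℝ) → (Fin 4 → ℝ)) :
    (Fin 4 → ℝ) → (Fin 4 → ℝ) :=
  fun x => fderiv ℝ g x (f x) - fderiv ℝ f x (g x)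

/-! Both `mttpF1` and `[mttpF0, mttpF1]` are constant fields, so each bracket with `mttpF0` is
`-D mttpF0(x)` applied to a constant vector: first `(0,0,0,b) ↦ (0,0,-b,0)`, since only the third
component of `mttpF0` depends on `x 3`, then `(0,0,-b,0) ↦ b · ∂ mttpF0/∂x₃`. -/

lemma lieBracket4_const_right (f : (Fin 4 → ℝ) → (Fin 4 → ℝ)) (v x : Fin 4 → ℝ) :
    lieBracket4 f (fun _ => v) x = -fderiv ℝ f x v := by
  simp [lieBracket4]

lemma fderiv_mttpF0_apply (a c g0 : ℝ) (x v : Fin 4 → ℝ) :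
    fderiv ℝ (mttpF0 a c g0) x v =
      ![-(a * Real.sin (x 2)) * v 2 - (c * x 1 * v 0 + c * x 0 * v 1),
        a * Real.cos (x 2) * v 2 + c * (2 * x 0) * v 0,
        v 3 - c * v 0, 0] := by
  have hcomp : ∀ i, DifferentiableAt ℝ (fun y => mttpF0 a c g0 y i) x := by
    intro i
    fin_cases i <;> simp [mttpF0] <;> fun_prop
  rw [fderiv_pi hcomp]
  funext i
  fin_cases i <;>
    simp (disch := fun_prop) [mttpF0, fderiv_fun_sub, fderiv_fun_add, fderiv_const_mul,
      fderiv_fun_mul, fderiv_fun_pow, fderiv_cos, fderiv_sin, fderiv_apply] <;> ring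

lemma lieBracket4_mttpF0_mttpF1 (a b c g0 : ℝ) :
    lieBracket4 (mttpF0 a c g0) (mttpF1 b) = fun _ => ![0, 0, -b, 0] := by
  funext x
  unfold mttpF1
  rw [lieBracket4_const_right, fderiv_mttpF0_apply]
  funext i
  fin_cases i <;> simp

theorem stmt1_general (a b c g0 : ℝ)
    (x : Fin 4 → ℝ) :
    lieBracket4 (mttpF0 a c g0) (lieBracket4 (mttpF0 a c g0) (mttpF1 b)) x =
      ![-(a * b) * Real.sin (x 2), a * b * Real.cos (x 2), 0, 0] := by
  rw [lieBracket4_mttpF0_mttpF1, lieBracket4_const_right, fderiv_mttpF0_apply]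
  funext i
  fin_cases i <;> simp <;> ring

theorem stmt1 (a b c g0 : ℝ) (ha : 0 < a) (hb : 0 < b) (hc : 0 ≤ c) (hg0 : 0 < g0)
    (x : Fin 4 → ℝ) :
    lieBracket4 (mttpF0 a c g0) (lieBracket4 (mttpF0 a c g0) (mttpF1 b)) x =
      ![-(a * b) * Real.sin (x 2), a * b * Real.cos (x 2), 0, 0] :=
  stmt1_general a b c g0 x
end

section
/- Let (x(·), p(·)) : I → ℝ⁴ × ℝ⁴ be a differentiable solution of the MTTP state and adjoint equations on an open interval I, for some measurable control u : I → [−1,1]. If p4(t) = 0, p3(t) = 0 and p1(t) sin x3(t) − p2(t) cos x3(t) = 0 for all t ∈ I, then x4(t)(p1(t) cos x3(t) + p2(t) sin x3(t)) + c p1(t) x2(t) sin x3(t) − 3 c p2(t) x1(t) sin x3(t) − 2 c p1(t) x1(t) cos x3(t) = 0 for all t ∈ I. -/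
theorem stmt9
(a b c g0 : ℝ) (ha : 0 < a) (hb : 0 < b) (hc : 0 ≤ c) (hg0 : 0 < g0)
    (α β : ℝ)
    (x1 x2 x3 x4 p1 p2 p3 p4 u : ℝ → ℝ)
    (hu_meas : Measurable u)
    (hu : ∀ t ∈ Set.Ioo α β, u t ∈ Set.Icc (-1 : ℝ) 1)
    (hx1 : ∀ t ∈ Set.Ioo α β,
      HasDerivAt x1 (a * Real.cos (x3 t) - c * x1 t * x2 t) t)
    (hx2 : ∀ t ∈ Set.Ioo α β,
      HasDerivAt x2 (a * Real.sin (x3 t) + c * (x1 t) ^ 2 - g0) t)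
    (hx3 : ∀ t ∈ Set.Ioo α β, HasDerivAt x3 (x4 t - c * x1 t) t)
    (hx4 : ∀ t ∈ Set.Ioo α β, HasDerivAt x4 (b * u t) t)
    (hp1 : ∀ t ∈ Set.Ioo α β,
      HasDerivAt p1 (c * (p1 t * x2 t - 2 * p2 t * x1 t + p3 t)) t)
    (hp2 : ∀ t ∈ Set.Ioo α β, HasDerivAt p2 (c * p1 t * x1 t) t)
    (hp3 : ∀ t ∈ Set.Ioo α β,
      HasDerivAt p3 (a * (p1 t * Real.sin (x3 t) - p2 t * Real.cos (x3 t))) t)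
    (hp4 : ∀ t ∈ Set.Ioo α β, HasDerivAt p4 (-(p3 t)) t)
    (h4zero : ∀ t ∈ Set.Ioo α β, p4 t = 0)
    (h3zero : ∀ t ∈ Set.Ioo α β, p3 t = 0)
    (hsing : ∀ t ∈ Set.Ioo α β,
      p1 t * Real.sin (x3 t) - p2 t * Real.cos (x3 t) = 0) :
    ∀ t ∈ Set.Ioo α β,
      x4 t * (p1 t * Real.cos (x3 t) + p2 t * Real.sin (x3 t))
        + c * p1 t * x2 t * Real.sin (x3 t)
        - 3 * c * p2 t * x1 t * Real.sin (x3 t)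
        - 2 * c * p1 t * x1 t * Real.cos (x3 t) = 0 := by
  intro t ht
  have hD : HasDerivAt (fun s => p1 s * Real.sin (x3 s) - p2 s * Real.cos (x3 s))
      (c * (p1 t * x2 t - 2 * p2 t * x1 t + p3 t) * Real.sin (x3 t)
        + p1 t * (Real.cos (x3 t) * (x4 t - c * x1 t))
        - (c * p1 t * x1 t * Real.cos (x3 t)
          + p2 t * (-Real.sin (x3 t) * (x4 t - c * x1 t)))) t :=
    ((hp1 t ht).mul (hx3 t ht).sin).sub ((hp2 t ht).mul (hx3 t ht).cos)
  have heq : (fun s => p1 s * Real.sin (x3 s) - p2 s * Real.cos (x3 s))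
      =ᶠ[nhds t] fun _ => (0 : ℝ) := by
    filter_upwards [isOpen_Ioo.mem_nhds ht] with s hs using hsing s hs
  have h0 : HasDerivAt (fun s => p1 s * Real.sin (x3 s) - p2 s * Real.cos (x3 s)) 0 t :=
    (hasDerivAt_const t (0 : ℝ)).congr_of_eventuallyEq heq
  have hkey := hD.unique h0
  rw [h3zero t ht] at hkey
  linear_combination hkey
end

section
/- Let (x(·), p(·)) : I → ℝ⁴ × ℝ⁴ be a differentiable solution of the MTTP state and adjoint equations on an open interval I, for some continuous control u : I → [−1,1]. Assume that on all of I one has p4 = 0, p3 = 0, p1 sin x3 − p2 cos x3 = 0, x4(p1 cos x3 + p2 sin x3) + c p1 x2 sin x3 − 3 c p2 x1 sin x3 − 2 c p1 x1 cos x3 = 0, and p1(t) cos x3(t) + p2(t) sin x3(t) ≠ 0 for all t ∈ I. Then for all t ∈ I the control is given by the singular control formula u(t) = (c/(2b))·((−c x2² + 2 x1 x4 − 3 c x1² + g0) sin 2x3 + 2 c x1 x2 cos 2x3 + 4 a cos x3 − 4 x2 x4 cos² x3), where all state variables are evaluated at time t. -/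
/-!
Write `S = p₁ cos x₃ + p₂ sin x₃`. Where `p₁ sin x₃ - p₂ cos x₃ = 0` the costate is
`(p₁, p₂) = S (cos x₃, sin x₃)`, so the expression assumed to vanish factors as `S · ψ(x)`
with `ψ = mttpSingularFactor` a function of the state alone. As `S ≠ 0`, `ψ` vanishes along
the arc, hence so does its derivative along the state equations. That derivative is `b u`
plus a function of the state, which yields the singular control.
-/

open Real Set Filter Topology

theorem HasDerivAt.eq_zero_of_eventuallyEq_zero {𝕜 F : Type*} [NontriviallyNormedField 𝕜]
    [NormedAddCommGroup F] [NormedSpace 𝕜 F] {f : 𝕜 → F} {f' : F} {t : 𝕜}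
    (hf : HasDerivAt f f' t) (h : f =ᶠ[𝓝 t] fun _ => 0) : f' = 0 :=
  hf.unique ((hasDerivAt_const t 0).congr_of_eventuallyEq h)

noncomputable def mttpSingularFactor (c x₁ x₂ x₃ x₄ : ℝ) : ℝ :=
  x₄ + c * x₂ * sin x₃ * cos x₃ - 3 * c * x₁ * sin x₃ ^ 2 - 2 * c * x₁ * cos x₃ ^ 2

theorem singular_condition_eq_mul_factor {c x₁ x₂ x₃ x₄ p₁ p₂ : ℝ}
    (h : p₁ * sin x₃ - p₂ * cos x₃ = 0) :
    x₄ * (p₁ * cos x₃ + p₂ * sin x₃) + c * p₁ * x₂ * sin x₃ - 3 * c * p₂ * x₁ * sin x₃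
        - 2 * c * p₁ * x₁ * cos x₃
      = (p₁ * cos x₃ + p₂ * sin x₃) * mttpSingularFactor c x₁ x₂ x₃ x₄ := by
  unfold mttpSingularFactor
  linear_combination (c * x₂ * sin x₃ ^ 2 + c * x₁ * sin x₃ * cos x₃) * h
    - (c * x₂ * sin x₃ * p₁ - 3 * c * x₁ * sin x₃ * p₂ - 2 * c * x₁ * cos x₃ * p₁)
      * sin_sq_add_cos_sq x₃

theorem hasDerivAt_mttpSingularFactor {c : ℝ} {x₁ x₂ x₃ x₄ : ℝ → ℝ} {x₁' x₂' x₃' x₄' t : ℝ}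
    (h₁ : HasDerivAt x₁ x₁' t) (h₂ : HasDerivAt x₂ x₂' t) (h₃ : HasDerivAt x₃ x₃' t)
    (h₄ : HasDerivAt x₄ x₄' t) :
    HasDerivAt (fun τ => mttpSingularFactor c (x₁ τ) (x₂ τ) (x₃ τ) (x₄ τ))
      (x₄' + c * (x₂' * sin (x₃ t) * cos (x₃ t) + x₂ t * (cos (x₃ t) ^ 2 - sin (x₃ t) ^ 2) * x₃')
        - 3 * c * (x₁' * sin (x₃ t) ^ 2 + 2 * x₁ t * sin (x₃ t) * cos (x₃ t) * x₃')
        - 2 * c * (x₁' * cos (x₃ t) ^ 2 - 2 * x₁ t * cos (x₃ t) * sin (x₃ t) * x₃')) t := by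
  have hs := h₃.sin
  have hc := h₃.cos
  exact ((((h₄.add (((h₂.const_mul c).mul hs).mul hc)).sub
    ((h₁.const_mul (3 * c)).mul (hs.pow 2))).sub
    ((h₁.const_mul (2 * c)).mul (hc.pow 2)))).congr_deriv (by simp only [Pi.mul_apply, Pi.pow_apply]; ring)

theorem mttp_singular_control {a b c g0 x₁ x₂ x₃ x₄ u : ℝ} (hb : b ≠ 0)
    (hψ : mttpSingularFactor c x₁ x₂ x₃ x₄ = 0)
    (hψ' : b * u
        + c * ((a * sin x₃ + c * x₁ ^ 2 - g0) * sin x₃ * cos x₃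
          + x₂ * (cos x₃ ^ 2 - sin x₃ ^ 2) * (x₄ - c * x₁))
        - 3 * c * ((a * cos x₃ - c * x₁ * x₂) * sin x₃ ^ 2
          + 2 * x₁ * sin x₃ * cos x₃ * (x₄ - c * x₁))
        - 2 * c * ((a * cos x₃ - c * x₁ * x₂) * cos x₃ ^ 2
          - 2 * x₁ * cos x₃ * sin x₃ * (x₄ - c * x₁)) = 0) :
    u = (c / (2 * b)) *
      ((-c * x₂ ^ 2 + 2 * x₁ * x₄ - 3 * c * x₁ ^ 2 + g0) * sin (2 * x₃)
        + 2 * c * x₁ * x₂ * cos (2 * x₃) + 4 * a * cos x₃ - 4 * x₂ * x₄ * cos x₃ ^ 2) := by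
  unfold mttpSingularFactor at hψ
  rw [sin_two_mul, cos_two_mul]
  field_simp
  linear_combination 2 * hψ' + 2 * c * x₂ * (sin x₃ ^ 2 + cos x₃ ^ 2) * hψ
    + (-2 * c ^ 2 * x₂ ^ 2 * sin x₃ * cos x₃ - 2 * c ^ 2 * x₁ * x₂
      + 4 * c ^ 2 * x₁ * x₂ * cos x₃ ^ 2 + 6 * c ^ 2 * x₁ * x₂ * sin x₃ ^ 2
      + 4 * a * c * cos x₃) * sin_sq_add_cos_sq x₃

theorem stmt10_general
(a b c g0 : ℝ) (hb : 0 < b)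
    (α β : ℝ)
    (x1 x2 x3 x4 p1 p2 u : ℝ → ℝ)
    (hx1 : ∀ t ∈ Set.Ioo α β,
      HasDerivAt x1 (a * Real.cos (x3 t) - c * x1 t * x2 t) t)
    (hx2 : ∀ t ∈ Set.Ioo α β,
      HasDerivAt x2 (a * Real.sin (x3 t) + c * (x1 t) ^ 2 - g0) t)
    (hx3 : ∀ t ∈ Set.Ioo α β, HasDerivAt x3 (x4 t - c * x1 t) t)
    (hx4 : ∀ t ∈ Set.Ioo α β, HasDerivAt x4 (b * u t) t)
    (hsing : ∀ t ∈ Set.Ioo α β,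
      p1 t * Real.sin (x3 t) - p2 t * Real.cos (x3 t) = 0)
    (hsing3 : ∀ t ∈ Set.Ioo α β,
      x4 t * (p1 t * Real.cos (x3 t) + p2 t * Real.sin (x3 t))
        + c * p1 t * x2 t * Real.sin (x3 t)
        - 3 * c * p2 t * x1 t * Real.sin (x3 t)
        - 2 * c * p1 t * x1 t * Real.cos (x3 t) = 0)
    (hne : ∀ t ∈ Set.Ioo α β,
      p1 t * Real.cos (x3 t) + p2 t * Real.sin (x3 t) ≠ 0) :
    ∀ t ∈ Set.Ioo α β,
      u t = (c / (2 * b)) *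
        ((-(c) * (x2 t) ^ 2 + 2 * x1 t * x4 t - 3 * c * (x1 t) ^ 2 + g0)
            * Real.sin (2 * x3 t)
          + 2 * c * x1 t * x2 t * Real.cos (2 * x3 t)
          + 4 * a * Real.cos (x3 t)
          - 4 * x2 t * x4 t * (Real.cos (x3 t)) ^ 2) := by
  have hψ : ∀ τ ∈ Ioo α β, mttpSingularFactor c (x1 τ) (x2 τ) (x3 τ) (x4 τ) = 0 := fun τ hτ =>
    (mul_eq_zero.mp ((singular_condition_eq_mul_factor (hsing τ hτ)).symm.trans
      (hsing3 τ hτ))).resolve_left (hne τ hτ)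
  intro t ht
  have hψ' := (hasDerivAt_mttpSingularFactor (c := c) (hx1 t ht) (hx2 t ht) (hx3 t ht)
    (hx4 t ht)).eq_zero_of_eventuallyEq_zero
      (eventually_of_mem (Ioo_mem_nhds ht.1 ht.2) hψ)
  exact mttp_singular_control hb.ne' (hψ t ht) hψ'

theorem stmt10
(a b c g0 : ℝ) (ha : 0 < a) (hb : 0 < b) (hc : 0 ≤ c) (hg0 : 0 < g0)
    (α β : ℝ)
    (x1 x2 x3 x4 p1 p2 p3 p4 u : ℝ → ℝ)
    (hu_meas : Measurable u)
    (hu : ∀ t ∈ Set.Ioo α β, u t ∈ Set.Icc (-1 : ℝ) 1)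
    (hx1 : ∀ t ∈ Set.Ioo α β,
      HasDerivAt x1 (a * Real.cos (x3 t) - c * x1 t * x2 t) t)
    (hx2 : ∀ t ∈ Set.Ioo α β,
      HasDerivAt x2 (a * Real.sin (x3 t) + c * (x1 t) ^ 2 - g0) t)
    (hx3 : ∀ t ∈ Set.Ioo α β, HasDerivAt x3 (x4 t - c * x1 t) t)
    (hx4 : ∀ t ∈ Set.Ioo α β, HasDerivAt x4 (b * u t) t)
    (hp1 : ∀ t ∈ Set.Ioo α β,
      HasDerivAt p1 (c * (p1 t * x2 t - 2 * p2 t * x1 t + p3 t)) t)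
    (hp2 : ∀ t ∈ Set.Ioo α β, HasDerivAt p2 (c * p1 t * x1 t) t)
    (hp3 : ∀ t ∈ Set.Ioo α β,
      HasDerivAt p3 (a * (p1 t * Real.sin (x3 t) - p2 t * Real.cos (x3 t))) t)
    (hp4 : ∀ t ∈ Set.Ioo α β, HasDerivAt p4 (-(p3 t)) t)
    (hu_cont : ContinuousOn u (Set.Ioo α β))
    (h4zero : ∀ t ∈ Set.Ioo α β, p4 t = 0)
    (h3zero : ∀ t ∈ Set.Ioo α β, p3 t = 0)
    (hsing : ∀ t ∈ Set.Ioo α β,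
      p1 t * Real.sin (x3 t) - p2 t * Real.cos (x3 t) = 0)
    (hsing3 : ∀ t ∈ Set.Ioo α β,
      x4 t * (p1 t * Real.cos (x3 t) + p2 t * Real.sin (x3 t))
        + c * p1 t * x2 t * Real.sin (x3 t)
        - 3 * c * p2 t * x1 t * Real.sin (x3 t)
        - 2 * c * p1 t * x1 t * Real.cos (x3 t) = 0)
    (hne : ∀ t ∈ Set.Ioo α β,
      p1 t * Real.cos (x3 t) + p2 t * Real.sin (x3 t) ≠ 0) :
    ∀ t ∈ Set.Ioo α β,
      u t = (c / (2 * b)) *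
        ((-(c) * (x2 t) ^ 2 + 2 * x1 t * x4 t - 3 * c * (x1 t) ^ 2 + g0)
            * Real.sin (2 * x3 t)
          + 2 * c * x1 t * x2 t * Real.cos (2 * x3 t)
          + 4 * a * Real.cos (x3 t)
          - 4 * x2 t * x4 t * (Real.cos (x3 t)) ^ 2) :=
  stmt10_general a b c g0 hb α β x1 x2 x3 x4 p1 p2 u hx1 hx2 hx3 hx4 hsing hsing3 hne
end

section
/- Let a = 12, b = 0.02, c = 10⁻⁶, g0 = 9.8, v_m = 5000 and ω_max = 0.3. Then for all real x1, x2, x3, x4 with x1² + x2² ≤ v_m², |x1| ≤ v_m, |x2| ≤ v_m and |x4| ≤ ω_max, the singular control value u_s = (c/(2b))·((−c x2² + 2 x1 x4 − 3 c x1² + g0) sin 2x3 + 2 c x1 x2 cos 2x3 + 4 a cos x3 − 4 x2 x4 cos² x3) satisfies |u_s| ≤ 0.3; in particular |u_s| < 1, so the singular control is admissible. -/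
theorem stmt12 (a b c g0 vm wm : ℝ)
    (ha : a = 12) (hb : b = 0.02) (hc : c = 1e-6) (hg0 : g0 = 9.8)
    (hvm : vm = 5000) (hwm : wm = 0.3)
    (x1 x2 x3 x4 : ℝ)
    (hv : x1 ^ 2 + x2 ^ 2 ≤ vm ^ 2)
    (h1 : |x1| ≤ vm) (h2 : |x2| ≤ vm) (h4 : |x4| ≤ wm) :
    |(c / (2 * b)) *
        ((-(c) * x2 ^ 2 + 2 * x1 * x4 - 3 * c * x1 ^ 2 + g0) * Real.sin (2 * x3)
          + 2 * c * x1 * x2 * Real.cos (2 * x3)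
          + 4 * a * Real.cos x3
          - 4 * x2 * x4 * (Real.cos x3) ^ 2)| ≤ 0.3 ∧
    |(c / (2 * b)) *
        ((-(c) * x2 ^ 2 + 2 * x1 * x4 - 3 * c * x1 ^ 2 + g0) * Real.sin (2 * x3)
          + 2 * c * x1 * x2 * Real.cos (2 * x3)
          + 4 * a * Real.cos x3
          - 4 * x2 * x4 * (Real.cos x3) ^ 2)| < 1 := by
  subst ha hb hc hg0 hvm hwm
  have hs := Real.abs_sin_le_one (2 * x3)
  have hc2 := Real.abs_cos_le_one (2 * x3)
  have hc1 := Real.abs_cos_le_one x3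
  have hx1 : x1 ^ 2 ≤ 5000 ^ 2 := by nlinarith [sq_nonneg x2]
  have hx2 : x2 ^ 2 ≤ 5000 ^ 2 := by nlinarith [sq_nonneg x1]
  have h14 : |x1 * x4| ≤ 1500 := by
    rw [abs_mul]
    calc |x1| * |x4| ≤ 5000 * 0.3 := by
          apply mul_le_mul h1 h4 (abs_nonneg _) (by norm_num)
      _ = 1500 := by norm_num
  have h24 : |x2 * x4| ≤ 1500 := by
    rw [abs_mul]
    calc |x2| * |x4| ≤ 5000 * 0.3 := by
          apply mul_le_mul h2 h4 (abs_nonneg _) (by norm_num)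
      _ = 1500 := by norm_num
  have h12 : |x1 * x2| ≤ 25000000 := by
    rw [abs_mul]
    calc |x1| * |x2| ≤ 5000 * 5000 := by
          apply mul_le_mul h1 h2 (abs_nonneg _) (by norm_num)
      _ = 25000000 := by norm_num
  have hA : |(-(1e-6 : ℝ) * x2 ^ 2 + 2 * x1 * x4 - 3 * 1e-6 * x1 ^ 2 + 9.8)| ≤ 3109.8 := by
    rw [abs_le] at *
    constructor <;> nlinarith [sq_nonneg x1, sq_nonneg x2]
  have hT1 : |(-(1e-6 : ℝ) * x2 ^ 2 + 2 * x1 * x4 - 3 * 1e-6 * x1 ^ 2 + 9.8) * Real.sin (2 * x3)| ≤ 3109.8 := by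
    rw [abs_mul]
    calc _ ≤ (3109.8 : ℝ) * 1 := by
          apply mul_le_mul hA hs (abs_nonneg _) (by norm_num)
      _ = 3109.8 := by norm_num
  have hT2 : |2 * (1e-6 : ℝ) * x1 * x2 * Real.cos (2 * x3)| ≤ 50 := by
    have : (2 * (1e-6 : ℝ) * x1 * x2) = 2 * 1e-6 * (x1 * x2) := by ring
    rw [this, abs_mul, abs_mul]
    calc |(2 * (1e-6 : ℝ))| * |x1 * x2| * |Real.cos (2 * x3)| ≤ 2e-6 * 25000000 * 1 := by
          apply mul_le_mul _ hc2 (abs_nonneg _) (by norm_num)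
          apply mul_le_mul (le_of_eq (by norm_num)) h12 (abs_nonneg _) (by norm_num)
      _ = 50 := by norm_num
  have hT3 : |4 * (12 : ℝ) * Real.cos x3| ≤ 48 := by
    rw [abs_mul]
    calc |4 * (12:ℝ)| * |Real.cos x3| ≤ 48 * 1 := by
          apply mul_le_mul (le_of_eq (by norm_num)) hc1 (abs_nonneg _) (by norm_num)
      _ = 48 := by norm_num
  have hcsq : |(Real.cos x3) ^ 2| ≤ 1 := by
    rw [abs_pow]
    calc |Real.cos x3| ^ 2 ≤ 1 ^ 2 := by
          apply pow_le_pow_left₀ (abs_nonneg _) hc1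
      _ = 1 := by norm_num
  have hT4 : |4 * x2 * x4 * (Real.cos x3) ^ 2| ≤ 6000 := by
    have : (4 * x2 * x4) = 4 * (x2 * x4) := by ring
    rw [this, abs_mul, abs_mul]
    calc |(4:ℝ)| * |x2 * x4| * |(Real.cos x3) ^ 2| ≤ 4 * 1500 * 1 := by
          apply mul_le_mul _ hcsq (abs_nonneg _) (by norm_num)
          apply mul_le_mul (le_of_eq (by norm_num)) h24 (abs_nonneg _) (by norm_num)
      _ = 6000 := by norm_num
  have hE : |((-(1e-6 : ℝ) * x2 ^ 2 + 2 * x1 * x4 - 3 * 1e-6 * x1 ^ 2 + 9.8) * Real.sin (2 * x3)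
          + 2 * 1e-6 * x1 * x2 * Real.cos (2 * x3)
          + 4 * 12 * Real.cos x3
          - 4 * x2 * x4 * (Real.cos x3) ^ 2)| ≤ 9207.8 := by
    calc _ ≤ |(-(1e-6 : ℝ) * x2 ^ 2 + 2 * x1 * x4 - 3 * 1e-6 * x1 ^ 2 + 9.8) * Real.sin (2 * x3)
          + 2 * 1e-6 * x1 * x2 * Real.cos (2 * x3)
          + 4 * 12 * Real.cos x3| + |4 * x2 * x4 * (Real.cos x3) ^ 2| := abs_sub _ _
      _ ≤ (|(-(1e-6 : ℝ) * x2 ^ 2 + 2 * x1 * x4 - 3 * 1e-6 * x1 ^ 2 + 9.8) * Real.sin (2 * x3)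
          + 2 * 1e-6 * x1 * x2 * Real.cos (2 * x3)| + |4 * 12 * Real.cos x3|) + |4 * x2 * x4 * (Real.cos x3) ^ 2| := by
          gcongr
          exact abs_add_le _ _
      _ ≤ ((|(-(1e-6 : ℝ) * x2 ^ 2 + 2 * x1 * x4 - 3 * 1e-6 * x1 ^ 2 + 9.8) * Real.sin (2 * x3)|
          + |2 * 1e-6 * x1 * x2 * Real.cos (2 * x3)|) + |4 * 12 * Real.cos x3|) + |4 * x2 * x4 * (Real.cos x3) ^ 2| := by
          gcongr
          exact abs_add_le _ _
      _ ≤ ((3109.8 + 50) + 48) + 6000 := by gcongr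
      _ = 9207.8 := by norm_num
  rw [abs_mul] at *
  have hfin : |(1e-6 : ℝ) / (2 * 0.02)| *
      |((-(1e-6 : ℝ) * x2 ^ 2 + 2 * x1 * x4 - 3 * 1e-6 * x1 ^ 2 + 9.8) * Real.sin (2 * x3)
          + 2 * 1e-6 * x1 * x2 * Real.cos (2 * x3)
          + 4 * 12 * Real.cos x3
          - 4 * x2 * x4 * (Real.cos x3) ^ 2)| ≤ 0.3 := by
    calc _ ≤ |(1e-6 : ℝ) / (2 * 0.02)| * 9207.8 := by gcongr
      _ ≤ 0.3 := by rw [abs_of_nonneg (by norm_num)]; norm_num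
  exact ⟨hfin, lt_of_le_of_lt hfin (by norm_num)⟩
end

section
/- Consider the flat-Earth case c = 0 with constants a>0, b>0, g0>0. Let (x(·), p(·)) : [0,t_f] → ℝ⁴ × ℝ⁴ be a differentiable solution of the MTTP state and adjoint equations with c = 0, for some measurable control u, and let γ_f ∈ ℝ with cos γ_f ≠ 0 satisfy the transversality condition p1(t_f) cos γ_f + p2(t_f) sin γ_f = 0. Then p1 and p2 are constant on [0,t_f], p1 = −p2 tan γ_f, and the second derivative of t ↦ p4(t) satisfies p̈4(t) = a p2 cos(x3(t) − γ_f)/cos γ_f for all t ∈ [0,t_f]. -/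
/-!
With `c = 0` the adjoint equations make `p₁, p₂` constant, so the transversality condition at
`t_f` holds at every time and, as `cos γ_f ≠ 0`, reads `p₁ = -p₂ tan γ_f`. Substituting this into
`ṗ₃ = a (p₁ sin x₃ - p₂ cos x₃)` and using `cos (x₃ - γ_f) = cos x₃ cos γ_f + sin x₃ sin γ_f`
gives `p̈₄ = -ṗ₃ = a p₂ cos (x₃ - γ_f) / cos γ_f`.
-/

open Real Set

theorem Convex.eq_of_hasDerivWithinAt_zero {E : Type*} [NormedAddCommGroup E] [NormedSpace ℝ E]
    {f : ℝ → E} {s : Set ℝ} (hs : Convex ℝ s) (hf : ∀ t ∈ s, HasDerivWithinAt f 0 s t)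
    {x y : ℝ} (hx : x ∈ s) (hy : y ∈ s) : f x = f y := by
  have h := hs.norm_image_sub_le_of_norm_hasDerivWithin_le hf (C := 0) (fun _ _ => by simp) hx hy
  rw [zero_mul, norm_le_zero_iff, sub_eq_zero] at h
  exact h.symm

theorem eq_of_hasDerivAt_zero_on_Icc {E : Type*} [NormedAddCommGroup E] [NormedSpace ℝ E]
    {f : ℝ → E} {a b : ℝ} (hf : ∀ t ∈ Icc a b, HasDerivAt f 0 t)
    {x y : ℝ} (hx : x ∈ Icc a b) (hy : y ∈ Icc a b) : f x = f y :=
  (convex_Icc a b).eq_of_hasDerivWithinAt_zero (fun t ht => (hf t ht).hasDerivWithinAt) hx hy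

theorem eq_neg_mul_tan_of_mul_cos_add_mul_sin_eq_zero {x y γ : ℝ} (hγ : cos γ ≠ 0)
    (h : x * cos γ + y * sin γ = 0) : x = -y * tan γ := by
  rw [tan_eq_sin_div_cos]
  field_simp
  linarith

/-- `p̈₄` appears as the derivative of `ṗ₄ = -p₃`. -/
theorem stmt17_general
(a : ℝ)
    (tf : ℝ)
    (x3 p1 p2 p3 : ℝ → ℝ)
    (hp1 : ∀ t ∈ Set.Icc 0 tf, HasDerivAt p1 0 t)
    (hp2 : ∀ t ∈ Set.Icc 0 tf, HasDerivAt p2 0 t)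
    (hp3 : ∀ t ∈ Set.Icc 0 tf,
      HasDerivAt p3 (a * (p1 t * Real.sin (x3 t) - p2 t * Real.cos (x3 t))) t)
    (γf : ℝ) (hγf : Real.cos γf ≠ 0)
    (htrans : p1 tf * Real.cos γf + p2 tf * Real.sin γf = 0) :
    (∀ t ∈ Set.Icc 0 tf, p1 t = p1 0) ∧
    (∀ t ∈ Set.Icc 0 tf, p2 t = p2 0) ∧
    (∀ t ∈ Set.Icc 0 tf, p1 t = -(p2 t) * Real.tan γf) ∧
    (∀ t ∈ Set.Icc 0 tf,
      HasDerivAt (fun s => -(p3 s))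
        (a * p2 t * Real.cos (x3 t - γf) / Real.cos γf) t) := by
  have hrel : ∀ t ∈ Icc 0 tf, p1 t = -p2 t * tan γf := by
    intro t ht
    have htf : tf ∈ Icc 0 tf := ⟨ht.1.trans ht.2, le_rfl⟩
    rw [eq_of_hasDerivAt_zero_on_Icc hp1 ht htf, eq_of_hasDerivAt_zero_on_Icc hp2 ht htf]
    exact eq_neg_mul_tan_of_mul_cos_add_mul_sin_eq_zero hγf htrans
  refine ⟨fun t ht => eq_of_hasDerivAt_zero_on_Icc hp1 ht (left_mem_Icc.2 (ht.1.trans ht.2)),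
    fun t ht => eq_of_hasDerivAt_zero_on_Icc hp2 ht (left_mem_Icc.2 (ht.1.trans ht.2)), hrel,
    fun t ht => ?_⟩
  have hd : HasDerivAt (fun s => -p3 s) _ t := (hp3 t ht).neg
  convert hd using 1
  rw [hrel t ht, cos_sub, tan_eq_sin_div_cos]
  field_simp
  ring

/-- Flat-Earth case (c = 0): the state and adjoint equations are written with c = 0
substituted. The conclusion about the second derivative of p4 is expressed through
the fact that, by the adjoint equation, ṗ4 = −p3 on [0,tf]. -/
theorem stmt17
(a b g0 : ℝ) (ha : 0 < a) (hb : 0 < b) (hg0 : 0 < g0)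
    (tf : ℝ) (htf : 0 < tf)
    (x1 x2 x3 x4 p1 p2 p3 p4 u : ℝ → ℝ)
    (hu_meas : Measurable u)
    (hu : ∀ t ∈ Set.Icc 0 tf, u t ∈ Set.Icc (-1 : ℝ) 1)
    (hx1 : ∀ t ∈ Set.Icc 0 tf, HasDerivAt x1 (a * Real.cos (x3 t)) t)
    (hx2 : ∀ t ∈ Set.Icc 0 tf, HasDerivAt x2 (a * Real.sin (x3 t) - g0) t)
    (hx3 : ∀ t ∈ Set.Icc 0 tf, HasDerivAt x3 (x4 t) t)
    (hx4 : ∀ t ∈ Set.Icc 0 tf, HasDerivAt x4 (b * u t) t)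
    (hp1 : ∀ t ∈ Set.Icc 0 tf, HasDerivAt p1 0 t)
    (hp2 : ∀ t ∈ Set.Icc 0 tf, HasDerivAt p2 0 t)
    (hp3 : ∀ t ∈ Set.Icc 0 tf,
      HasDerivAt p3 (a * (p1 t * Real.sin (x3 t) - p2 t * Real.cos (x3 t))) t)
    (hp4 : ∀ t ∈ Set.Icc 0 tf, HasDerivAt p4 (-(p3 t)) t)
    (γf : ℝ) (hγf : Real.cos γf ≠ 0)
    (htrans : p1 tf * Real.cos γf + p2 tf * Real.sin γf = 0) :
    (∀ t ∈ Set.Icc 0 tf, p1 t = p1 0) ∧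
    (∀ t ∈ Set.Icc 0 tf, p2 t = p2 0) ∧
    (∀ t ∈ Set.Icc 0 tf, p1 t = -(p2 t) * Real.tan γf) ∧
    (∀ t ∈ Set.Icc 0 tf,
      HasDerivAt (fun s => -(p3 s))
        (a * p2 t * Real.cos (x3 t - γf) / Real.cos γf) t) :=
  stmt17_general a tf x3 p1 p2 p3 hp1 hp2 hp3 γf hγf htrans
end

section
/- Consider the flat-Earth case c = 0 with constants a>0, b>0, g0>0. Let (x(·), p(·)) : [0,t_f] → ℝ⁴ × ℝ⁴ be a differentiable solution of the MTTP state and adjoint equations with c = 0, for some measurable control u, where x3(·) is continuous, p1 and p2 are constant, cos γ_f ≠ 0 and p1 = −p2 tan γ_f. Then for all t ∈ [0,t_f], p4(t) = p4(0) − p3(0)·t + (a p2/cos γ_f) ∫₀ᵗ ∫₀ˢ cos(x3(τ) − γ_f) dτ ds. -/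
open Real Set intervalIntegral

/-!
For `c = 0` and constant `p₂`, the transversality relation `p₁ = -p₂ tan γ_f` collapses
`ṗ₃ = a (p₁ sin x₃ - p₂ cos x₃)` into `-(a p₂ / cos γ_f) cos (x₃ - γ_f)`.
Integrating once gives `p₃`, and integrating `ṗ₄ = -p₃` once more gives the double integral.
-/

lemma eq_add_integral_of_hasDerivAt {E : Type*} [NormedAddCommGroup E] [NormedSpace ℝ E]
    [CompleteSpace E] {f f' : ℝ → E} {a b : ℝ}
    (hf : ∀ t ∈ Icc a b, HasDerivAt f (f' t) t) (hf' : ContinuousOn f' (Icc a b)) :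
    ∀ t ∈ Icc a b, f t = f a + ∫ s in a..t, f' s := by
  intro t ht
  have hsub : uIcc a t ⊆ Icc a b := by
    rw [uIcc_of_le ht.1]
    exact Icc_subset_Icc_right ht.2
  rw [integral_eq_sub_of_hasDerivAt (fun s hs => hf s (hsub hs))
    ((hf'.mono hsub).intervalIntegrable), add_sub_cancel]

lemma tan_mul_sin_add_cos {γ : ℝ} (hγ : cos γ ≠ 0) (x : ℝ) :
    tan γ * sin x + cos x = cos (x - γ) / cos γ := by
  rw [cos_sub, tan_eq_sin_div_cos]
  field_simp
  ring

theorem stmt18_general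
(a : ℝ)
    (tf : ℝ)
    (x3 p1 p2 p3 p4 : ℝ → ℝ)
    (hp3 : ∀ t ∈ Set.Icc 0 tf,
      HasDerivAt p3 (a * (p1 t * Real.sin (x3 t) - p2 t * Real.cos (x3 t))) t)
    (hp4 : ∀ t ∈ Set.Icc 0 tf, HasDerivAt p4 (-(p3 t)) t)
    (γf : ℝ) (hγf : Real.cos γf ≠ 0)
    (hx3cont : Continuous x3)
    (hp2const : ∀ t ∈ Set.Icc 0 tf, p2 t = p2 0)
    (hrel : ∀ t ∈ Set.Icc 0 tf, p1 t = -(p2 t) * Real.tan γf) :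
    ∀ t ∈ Set.Icc 0 tf,
      p4 t = p4 0 - p3 0 * t
        + (a * p2 0 / Real.cos γf) *
            ∫ s in (0 : ℝ)..t, ∫ τ in (0 : ℝ)..s, Real.cos (x3 τ - γf) := by
  set K := a * p2 0 / cos γf with hK
  set F := fun s => ∫ τ in (0 : ℝ)..s, cos (x3 τ - γf)
  have hcos : Continuous fun τ => cos (x3 τ - γf) := by fun_prop
  have hF : Continuous F := continuous_primitive (hcos.intervalIntegrable) 0
  have hp3' : ∀ t ∈ Icc 0 tf, HasDerivAt p3 (-K * cos (x3 t - γf)) t := by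
    intro t ht
    convert hp3 t ht using 1
    rw [hrel t ht, hp2const t ht]
    linear_combination (a * p2 0) * tan_mul_sin_add_cos hγf (x3 t) - cos (x3 t - γf) * hK
  have hp3_eq : ∀ t ∈ Icc 0 tf, p3 t = p3 0 - K * F t := by
    intro t ht
    rw [eq_add_integral_of_hasDerivAt hp3' (by fun_prop) t ht, integral_const_mul]
    ring
  have hp4' : ∀ t ∈ Icc 0 tf, HasDerivAt p4 (K * F t - p3 0) t := by
    intro t ht
    convert hp4 t ht using 1
    rw [hp3_eq t ht]
    ring
  intro t ht
  rw [eq_add_integral_of_hasDerivAt hp4' (by fun_prop) t ht,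
    integral_sub ((hF.const_mul K).intervalIntegrable 0 t) intervalIntegrable_const,
    integral_const_mul, integral_const, smul_eq_mul]
  ring

/-- Flat-Earth case (c = 0): integral representation of p4. -/
theorem stmt18
(a b g0 : ℝ) (ha : 0 < a) (hb : 0 < b) (hg0 : 0 < g0)
    (tf : ℝ) (htf : 0 < tf)
    (x1 x2 x3 x4 p1 p2 p3 p4 u : ℝ → ℝ)
    (hu_meas : Measurable u)
    (hu : ∀ t ∈ Set.Icc 0 tf, u t ∈ Set.Icc (-1 : ℝ) 1)
    (hx1 : ∀ t ∈ Set.Icc 0 tf, HasDerivAt x1 (a * Real.cos (x3 t)) t)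
    (hx2 : ∀ t ∈ Set.Icc 0 tf, HasDerivAt x2 (a * Real.sin (x3 t) - g0) t)
    (hx3 : ∀ t ∈ Set.Icc 0 tf, HasDerivAt x3 (x4 t) t)
    (hx4 : ∀ t ∈ Set.Icc 0 tf, HasDerivAt x4 (b * u t) t)
    (hp1 : ∀ t ∈ Set.Icc 0 tf, HasDerivAt p1 0 t)
    (hp2 : ∀ t ∈ Set.Icc 0 tf, HasDerivAt p2 0 t)
    (hp3 : ∀ t ∈ Set.Icc 0 tf,
      HasDerivAt p3 (a * (p1 t * Real.sin (x3 t) - p2 t * Real.cos (x3 t))) t)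
    (hp4 : ∀ t ∈ Set.Icc 0 tf, HasDerivAt p4 (-(p3 t)) t)
    (γf : ℝ) (hγf : Real.cos γf ≠ 0)
    (hx3cont : Continuous x3)
    (hp1const : ∀ t ∈ Set.Icc 0 tf, p1 t = p1 0)
    (hp2const : ∀ t ∈ Set.Icc 0 tf, p2 t = p2 0)
    (hrel : ∀ t ∈ Set.Icc 0 tf, p1 t = -(p2 t) * Real.tan γf) :
    ∀ t ∈ Set.Icc 0 tf,
      p4 t = p4 0 - p3 0 * t
        + (a * p2 0 / Real.cos γf) *
            ∫ s in (0 : ℝ)..t, ∫ τ in (0 : ℝ)..s, Real.cos (x3 τ - γf) :=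
  stmt18_general a tf x3 p1 p2 p3 p4 hp3 hp4 γf hγf hx3cont hp2const hrel
end
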